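/- arXiv:1112.5718 — 3 statements merged into one kernel-verified Lean document; each statement's English description precedes it below -/
import Mathlib

section
/- Let f ∈ C(∂U) and let G ∈ C(K) be the unique function with Φ(G_U) = G_U and G = f on ∂U. If F ∈ C(K) is any continuous extension of f to K, then the sequence {Φ^n(F_U)}_{n≥1} converges uniformly on U to G_U. -/
open MeasureTheory Filter Topology ComplexOrder

/-- `Φ` is a Markov operator on the bounded Borel measurable functions on `U`:
for each `x` there is a Borel probability measure `P x` representing `Φ` at `x`. -/
def IsMarkovOperator {U : Type*} [MeasurableSpace U]
    (Φ : (U → ℂ) → (U → ℂ)) : Prop :=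
  ∀ x : U, ∃ P : Measure U, IsProbabilityMeasure P ∧
    ∀ f : U → ℂ, Measurable f → (∃ C : ℝ, ∀ y, ‖f y‖ ≤ C) →
      Φ f x = ∫ y, f y ∂P

/-- `Φ` has the strong Feller property: it maps bounded Borel measurable
functions to continuous functions. -/
def HasStrongFeller {U : Type*} [MeasurableSpace U] [TopologicalSpace U]
    (Φ : (U → ℂ) → (U → ℂ)) : Prop :=
  ∀ f : U → ℂ, Measurable f → (∃ C : ℝ, ∀ y, ‖f y‖ ≤ C) → Continuous (Φ f)

/-- Boundary condition (A): for each boundary point `x` there is a barrier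
`h ∈ C(K)` with `h x = 0`, `h < 0` off `x`, and `Φ (h_U) ≥ h_U` on `U`. -/
def CondA {K : Type*} [TopologicalSpace K] (U : Set K)
    (Φ : (↥U → ℂ) → (↥U → ℂ)) : Prop :=
  ∀ x ∈ Uᶜ, ∃ h : C(K, ℂ), h x = 0 ∧ (∀ y : K, y ≠ x → h y < 0) ∧
    ∀ u : ↥U, h u.1 ≤ Φ (fun v : ↥U => h v.1) u

/-- Maximum principle (B): every real-valued `g ∈ C(K)` with `Φ (g_U) ≥ g_U`
on `U` attaining its global maximum inside `U` is constant. -/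
def CondB {K : Type*} [TopologicalSpace K] (U : Set K)
    (Φ : (↥U → ℂ) → (↥U → ℂ)) : Prop :=
  ∀ g : C(K, ℂ), (∀ x : K, (g x).im = 0) →
    (∀ u : ↥U, g u.1 ≤ Φ (fun v : ↥U => g v.1) u) →
    (∃ z ∈ U, ∀ x : K, g x ≤ g z) →
    ∀ x y : K, g x = g y

/-- The map `Ψ` : `Ψ f = Φ (f_U)` on `U` and `Ψ f = f` on `∂U = K \ U`. -/
noncomputable def psiFun {K : Type*} (U : Set K)
    (Φ : (↥U → ℂ) → (↥U → ℂ)) (f : K → ℂ) : K → ℂ :=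
  open Classical in fun x => if hx : x ∈ U then Φ (fun v : ↥U => f v.1) ⟨x, hx⟩ else f x

/-! Writing `d = F - G`, linearity and `Φ G = G` give `Φⁿ F - G = Φⁿ d`, and `‖Φⁿ d‖ ≤ Tⁿ s` for
every superharmonic majorant `s` of `‖d‖`, where `T` is `Φ` acting on real functions. Minima of
the barriers of (A) over a finite cover of the compact boundary give, for each `ε > 0`, such an `s`
with `s < ε` on `∂U`. The decreasing iterates `Tⁿ s` converge to a harmonic `w`, continuous by the
strong Feller property, with `w ≤ s < ε` near `∂U`; the maximum principle (B) gives `w ≤ ε` on all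
of `U`, and Dini's theorem on the compact set `{s ≥ ε} ⊆ U` makes the convergence uniform. -/

section MarkovOperator

variable {X : Type*} [MeasurableSpace X]

def BoundedMeasurable {E : Type*} [Norm E] [MeasurableSpace E] (f : X → E) : Prop :=
  Measurable f ∧ ∃ C : ℝ, ∀ y, ‖f y‖ ≤ C

noncomputable def realMarkov (Φ : (X → ℂ) → (X → ℂ)) (g : X → ℝ) (x : X) : ℝ :=
  (Φ (fun y => (g y : ℂ)) x).re

def IsSuperharmonic (Φ : (X → ℂ) → (X → ℂ)) (s : X → ℝ) : Prop :=
  ∀ x, realMarkov Φ s x ≤ s x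

lemma boundedMeasurable_const (c : ℝ) : BoundedMeasurable (fun _ : X => c) :=
  ⟨measurable_const, ‖c‖, fun _ => le_rfl⟩

lemma BoundedMeasurable.ofReal {g : X → ℝ} (hg : BoundedMeasurable g) :
    BoundedMeasurable (fun y => (g y : ℂ)) :=
  ⟨Complex.measurable_ofReal.comp hg.1, hg.2.imp fun _ hC y => by simpa using hC y⟩

lemma BoundedMeasurable.norm {f : X → ℂ} (hf : BoundedMeasurable f) :
    BoundedMeasurable (fun y => ‖f y‖) :=
  ⟨hf.1.norm, hf.2.imp fun _ hC y => by simpa using hC y⟩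

lemma BoundedMeasurable.const_add_mul {g : X → ℝ} (hg : BoundedMeasurable g) (a b : ℝ) :
    BoundedMeasurable (fun y => a + b * g y) := by
  obtain ⟨hm, C, hC⟩ := hg
  refine ⟨measurable_const.add (measurable_const.mul hm), ‖a‖ + ‖b‖ * C, fun y => ?_⟩
  calc ‖a + b * g y‖ ≤ ‖a‖ + ‖b‖ * ‖g y‖ := (norm_add_le _ _).trans_eq (by rw [norm_mul])
    _ ≤ ‖a‖ + ‖b‖ * C := by gcongr; exact hC y

lemma BoundedMeasurable.integrable {E : Type*} [NormedAddCommGroup E] [MeasurableSpace E]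
    [OpensMeasurableSpace E] [SecondCountableTopology E] {f : X → E}
    (hf : BoundedMeasurable f) (P : Measure X) [IsFiniteMeasure P] : Integrable f P := by
  obtain ⟨hm, C, hC⟩ := hf
  exact ⟨hm.aestronglyMeasurable, HasFiniteIntegral.of_bounded (C := C) (Eventually.of_forall hC)⟩

lemma boundedMeasurable_restrict_of_continuous {K E : Type*} [TopologicalSpace K]
    [CompactSpace K] [MeasurableSpace K] [OpensMeasurableSpace K] [NormedAddCommGroup E]
    [MeasurableSpace E] [BorelSpace E] (U : Set K) {A : K → E} (hA : Continuous A) :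
    BoundedMeasurable (fun v : U => A v) := by
  obtain ⟨C, hC⟩ := (isCompact_range hA.norm).bddAbove
  exact ⟨(hA.comp continuous_subtype_val).measurable, C, fun v => hC (Set.mem_range_self _)⟩

variable {Φ : (X → ℂ) → (X → ℂ)}

lemma IsMarkovOperator.exists_measure (hM : IsMarkovOperator Φ) (x : X) :
    ∃ P : Measure X, IsProbabilityMeasure P ∧
      (∀ f : X → ℂ, BoundedMeasurable f → Φ f x = ∫ y, f y ∂P) ∧
      ∀ g : X → ℝ, BoundedMeasurable g → realMarkov Φ g x = ∫ y, g y ∂P := by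
  obtain ⟨P, hP, hrep⟩ := hM x
  have hΦ : ∀ f : X → ℂ, BoundedMeasurable f → Φ f x = ∫ y, f y ∂P :=
    fun f hf => hrep f hf.1 hf.2
  refine ⟨P, hP, hΦ, fun g hg => ?_⟩
  rw [realMarkov, hΦ _ hg.ofReal, integral_complex_ofReal, Complex.ofReal_re]

lemma IsMarkovOperator.map_add (hM : IsMarkovOperator Φ) {f g : X → ℂ}
    (hf : BoundedMeasurable f) (hg : BoundedMeasurable g) (x : X) :
    Φ (fun y => f y + g y) x = Φ f x + Φ g x := by
  obtain ⟨P, hP, hΦ, -⟩ := hM.exists_measure x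
  have hfg : BoundedMeasurable (fun y => f y + g y) := by
    obtain ⟨hmf, Cf, hCf⟩ := hf
    obtain ⟨hmg, Cg, hCg⟩ := hg
    exact ⟨hmf.add hmg, Cf + Cg, fun y => (norm_add_le _ _).trans (add_le_add (hCf y) (hCg y))⟩
  rw [hΦ _ hfg, hΦ _ hf, hΦ _ hg]
  exact integral_add (hf.integrable P) (hg.integrable P)

lemma IsMarkovOperator.norm_apply_le (hM : IsMarkovOperator Φ) {f : X → ℂ}
    (hf : BoundedMeasurable f) {C : ℝ} (hC : ∀ y, ‖f y‖ ≤ C) (x : X) : ‖Φ f x‖ ≤ C := by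
  obtain ⟨P, hP, hΦ, -⟩ := hM.exists_measure x
  rw [hΦ _ hf]
  simpa using norm_integral_le_of_norm_le_const (μ := P) (Eventually.of_forall hC)

lemma IsMarkovOperator.norm_apply_le_realMarkov (hM : IsMarkovOperator Φ) {f : X → ℂ}
    (hf : BoundedMeasurable f) (x : X) : ‖Φ f x‖ ≤ realMarkov Φ (fun y => ‖f y‖) x := by
  obtain ⟨P, hP, hΦ, hT⟩ := hM.exists_measure x
  rw [hΦ _ hf, hT _ hf.norm]
  exact norm_integral_le_integral_norm f

lemma IsMarkovOperator.abs_realMarkov_le (hM : IsMarkovOperator Φ) {g : X → ℝ}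
    (hg : BoundedMeasurable g) {C : ℝ} (hC : ∀ y, |g y| ≤ C) (x : X) :
    |realMarkov Φ g x| ≤ C :=
  (Complex.abs_re_le_norm _).trans (hM.norm_apply_le hg.ofReal (by simpa using hC) x)

lemma IsMarkovOperator.apply_ofReal (hM : IsMarkovOperator Φ) {g : X → ℝ}
    (hg : BoundedMeasurable g) :
    Φ (fun y => (g y : ℂ)) = fun x => (realMarkov Φ g x : ℂ) := by
  funext x
  obtain ⟨P, -, hΦ, hT⟩ := hM.exists_measure x
  rw [hΦ _ hg.ofReal, hT _ hg, integral_complex_ofReal]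

lemma IsMarkovOperator.realMarkov_mono (hM : IsMarkovOperator Φ) {f g : X → ℝ}
    (hf : BoundedMeasurable f) (hg : BoundedMeasurable g) (hfg : f ≤ g) (x : X) :
    realMarkov Φ f x ≤ realMarkov Φ g x := by
  obtain ⟨P, hP, -, hT⟩ := hM.exists_measure x
  rw [hT _ hf, hT _ hg]
  exact integral_mono (hf.integrable P) (hg.integrable P) hfg

lemma IsMarkovOperator.realMarkov_const (hM : IsMarkovOperator Φ) (c : ℝ) (x : X) :
    realMarkov Φ (fun _ => c) x = c := by
  obtain ⟨P, hP, -, hT⟩ := hM.exists_measure x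
  simp [hT _ (boundedMeasurable_const c)]

lemma IsMarkovOperator.realMarkov_const_add_mul (hM : IsMarkovOperator Φ) {g : X → ℝ}
    (hg : BoundedMeasurable g) (a b : ℝ) (x : X) :
    realMarkov Φ (fun y => a + b * g y) x = a + b * realMarkov Φ g x := by
  obtain ⟨P, hP, -, hT⟩ := hM.exists_measure x
  rw [hT _ (hg.const_add_mul a b), hT _ hg,
    integral_add (integrable_const a) ((hg.integrable P).const_mul b), integral_const_mul]
  simp

lemma IsMarkovOperator.tendsto_realMarkov (hM : IsMarkovOperator Φ) {g : ℕ → X → ℝ}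
    {g₀ : X → ℝ} {C : ℝ} (hg : ∀ n, BoundedMeasurable (g n)) (hg₀ : BoundedMeasurable g₀)
    (hC : ∀ n y, |g n y| ≤ C) (hlim : ∀ y, Tendsto (g · y) atTop (𝓝 (g₀ y))) (x : X) :
    Tendsto (fun n => realMarkov Φ (g n) x) atTop (𝓝 (realMarkov Φ g₀ x)) := by
  obtain ⟨P, hP, -, hT⟩ := hM.exists_measure x
  simp only [hT _ (hg _), hT _ hg₀]
  exact tendsto_integral_of_dominated_convergence (fun _ => C)
    (fun n => (hg n).1.aestronglyMeasurable) (integrable_const C)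
    (fun n => Eventually.of_forall (hC n)) (Eventually.of_forall hlim)

lemma continuous_realMarkov [TopologicalSpace X] (hSF : HasStrongFeller Φ) {g : X → ℝ}
    (hg : BoundedMeasurable g) : Continuous (realMarkov Φ g) :=
  Complex.continuous_re.comp (hSF _ hg.ofReal.1 hg.ofReal.2)

end MarkovOperator

section Iterates

variable {X : Type*} [MeasurableSpace X] [TopologicalSpace X] [OpensMeasurableSpace X]
  {Φ : (X → ℂ) → (X → ℂ)}

lemma BoundedMeasurable.iterate_markov (hM : IsMarkovOperator Φ) (hSF : HasStrongFeller Φ)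
    {f : X → ℂ} (hf : BoundedMeasurable f) (n : ℕ) : BoundedMeasurable (Φ^[n] f) := by
  induction n with
  | zero => exact hf
  | succ n ih =>
    rw [Function.iterate_succ_apply']
    obtain ⟨C, hC⟩ := ih.2
    exact ⟨(hSF _ ih.1 ih.2).measurable, C, hM.norm_apply_le ih hC⟩

lemma BoundedMeasurable.iterate_realMarkov (hM : IsMarkovOperator Φ) (hSF : HasStrongFeller Φ)
    {s : X → ℝ} (hs : BoundedMeasurable s) (n : ℕ) :
    BoundedMeasurable ((realMarkov Φ)^[n] s) := by
  induction n with
  | zero => exact hs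
  | succ n ih =>
    rw [Function.iterate_succ_apply']
    obtain ⟨C, hC⟩ := ih.2
    exact ⟨(continuous_realMarkov hSF ih).measurable, C, hM.abs_realMarkov_le ih hC⟩

lemma continuous_iterate_realMarkov (hM : IsMarkovOperator Φ) (hSF : HasStrongFeller Φ)
    {s : X → ℝ} (hs : BoundedMeasurable s) (hsc : Continuous s) :
    ∀ n, Continuous ((realMarkov Φ)^[n] s)
  | 0 => hsc
  | n + 1 => by
    rw [Function.iterate_succ_apply']
    exact continuous_realMarkov hSF (hs.iterate_realMarkov hM hSF n)

lemma IsMarkovOperator.abs_iterate_realMarkov_le (hM : IsMarkovOperator Φ)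
    (hSF : HasStrongFeller Φ) {s : X → ℝ} (hs : BoundedMeasurable s) {C : ℝ}
    (hC : ∀ y, |s y| ≤ C) (n : ℕ) (x : X) : |(realMarkov Φ)^[n] s x| ≤ C := by
  induction n generalizing x with
  | zero => exact hC x
  | succ n ih =>
    rw [Function.iterate_succ_apply']
    exact hM.abs_realMarkov_le (hs.iterate_realMarkov hM hSF n) ih x

lemma IsMarkovOperator.norm_iterate_le (hM : IsMarkovOperator Φ) (hSF : HasStrongFeller Φ)
    {f : X → ℂ} {s : X → ℝ} (hf : BoundedMeasurable f) (hs : BoundedMeasurable s)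
    (hfs : ∀ y, ‖f y‖ ≤ s y) (n : ℕ) (x : X) : ‖Φ^[n] f x‖ ≤ (realMarkov Φ)^[n] s x := by
  induction n generalizing x with
  | zero => exact hfs x
  | succ n ih =>
    rw [Function.iterate_succ_apply', Function.iterate_succ_apply']
    exact (hM.norm_apply_le_realMarkov (hf.iterate_markov hM hSF n) x).trans
      (hM.realMarkov_mono (hf.iterate_markov hM hSF n).norm (hs.iterate_realMarkov hM hSF n) ih x)

lemma IsMarkovOperator.iterate_add_of_fixed (hM : IsMarkovOperator Φ) (hSF : HasStrongFeller Φ)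
    {f g : X → ℂ} (hf : BoundedMeasurable f) (hg : BoundedMeasurable g)
    (hfix : ∀ x, Φ g x = g x) (n : ℕ) :
    Φ^[n] (fun y => f y + g y) = fun y => Φ^[n] f y + g y := by
  induction n with
  | zero => rfl
  | succ n ih =>
    funext x
    rw [Function.iterate_succ_apply', Function.iterate_succ_apply', ih,
      hM.map_add (hf.iterate_markov hM hSF n) hg, hfix]

lemma IsSuperharmonic.antitone_iterate (hM : IsMarkovOperator Φ) (hSF : HasStrongFeller Φ)
    {s : X → ℝ} (hs : BoundedMeasurable s) (hsup : IsSuperharmonic Φ s) (x : X) :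
    Antitone fun n => (realMarkov Φ)^[n] s x := by
  have hstep : ∀ n x, (realMarkov Φ)^[n + 1] s x ≤ (realMarkov Φ)^[n] s x := by
    intro n
    induction n with
    | zero => exact hsup
    | succ n ih =>
      intro x
      have h := hM.realMarkov_mono (hs.iterate_realMarkov hM hSF _)
        (hs.iterate_realMarkov hM hSF _) ih x
      rwa [← Function.iterate_succ_apply' (realMarkov Φ) n,
        ← Function.iterate_succ_apply' (realMarkov Φ) (n + 1)] at h
  exact antitone_nat_of_succ_le fun n => hstep n x

lemma IsSuperharmonic.exists_tendsto_iterate (hM : IsMarkovOperator Φ)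
    (hSF : HasStrongFeller Φ) {s : X → ℝ} (hs : BoundedMeasurable s)
    (hsup : IsSuperharmonic Φ s) :
    ∃ w : X → ℝ, Continuous w ∧ BoundedMeasurable w ∧ (∀ x, realMarkov Φ w x = w x) ∧
      ∀ x, Tendsto (fun n => (realMarkov Φ)^[n] s x) atTop (𝓝 (w x)) := by
  obtain ⟨C, hC⟩ := hs.2
  have hbd : ∀ n x, |(realMarkov Φ)^[n] s x| ≤ C := hM.abs_iterate_realMarkov_le hSF hs hC
  have hbelow : ∀ x, BddBelow (Set.range fun n => (realMarkov Φ)^[n] s x) := fun x =>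
    ⟨-C, by rintro _ ⟨n, rfl⟩; exact neg_le_of_abs_le (hbd n x)⟩
  set w : X → ℝ := fun x => ⨅ n, (realMarkov Φ)^[n] s x
  have hlim : ∀ x, Tendsto (fun n => (realMarkov Φ)^[n] s x) atTop (𝓝 (w x)) := fun x =>
    tendsto_atTop_ciInf (hsup.antitone_iterate hM hSF hs x) (hbelow x)
  have hw : BoundedMeasurable w := by
    refine ⟨Measurable.iInf fun n => (hs.iterate_realMarkov hM hSF n).1, C, fun x => ?_⟩
    exact abs_le.2 ⟨le_ciInf fun n => neg_le_of_abs_le (hbd n x),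
      (ciInf_le (hbelow x) 0).trans (le_of_abs_le (hbd 0 x))⟩
  have hfix : ∀ x, realMarkov Φ w x = w x := fun x =>
    tendsto_nhds_unique
      (hM.tendsto_realMarkov (hs.iterate_realMarkov hM hSF) hw hbd hlim x)
      (by simpa only [Function.comp_def, Function.iterate_succ_apply'] using
        (hlim x).comp (tendsto_add_atTop_nat 1))
  refine ⟨w, ?_, hw, hfix, hlim⟩
  rw [show w = realMarkov Φ w from funext fun x => (hfix x).symm]
  exact continuous_realMarkov hSF hw

end Iterates

section Boundary

variable {K : Type*} [TopologicalSpace K] {U : Set K} {Φ : (↥U → ℂ) → (↥U → ℂ)}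

lemma CondA.exists_real (hA : CondA U Φ) {x : K} (hx : x ∈ Uᶜ) :
    ∃ η : K → ℝ, Continuous η ∧ η x = 0 ∧ (∀ y, y ≠ x → η y < 0) ∧
      ∀ u : U, η u ≤ realMarkov Φ (fun v : U => η v) u := by
  obtain ⟨h, hx0, hneg, hsub⟩ := hA x hx
  have hre : ∀ y, ((h y).re : ℂ) = h y := by
    intro y
    rcases eq_or_ne y x with rfl | hy
    · simp [hx0]
    · exact Complex.ext rfl (by simpa using ((Complex.lt_def.mp (hneg y hy)).2).symm)
  refine ⟨fun y => (h y).re, Complex.continuous_re.comp h.continuous, by simp [hx0],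
    fun y hy => by simpa using (Complex.lt_def.mp (hneg y hy)).1, fun u => ?_⟩
  simp only [realMarkov, hre]
  exact (Complex.le_def.mp (hsub u)).1

lemma IsOpen.exists_continuous_extend_max (hU : IsOpen U) {w : U → ℝ} (hwc : Continuous w)
    {W : Set K} (hW : IsOpen W) (hUW : Uᶜ ⊆ W) {c : ℝ} (hc : ∀ u : U, u.1 ∈ W → w u ≤ c) :
    ∃ g : K → ℝ, Continuous g ∧ (∀ v : U, g v = max (w v) c) ∧ ∀ y ∈ W, g y = c := by
  classical
  set g : K → ℝ := fun y => if hy : y ∈ U then max (w ⟨y, hy⟩) c else c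
  have hgU : ∀ v : U, g v = max (w v) c := fun v => dif_pos v.2
  have hgW : ∀ y ∈ W, g y = c := by
    intro y hy
    by_cases hyU : y ∈ U
    · simp only [g, dif_pos hyU]
      exact max_eq_right (hc ⟨y, hyU⟩ hy)
    · simp only [g, dif_neg hyU]
  have hUon : ContinuousOn g U := by
    rw [continuousOn_iff_continuous_domRestrict]
    exact (hwc.max continuous_const).congr fun v => (hgU v).symm
  have hWon : ContinuousOn g W := continuousOn_const.congr fun y hy => hgW y hy
  have hUW' : U ∪ W = Set.univ :=
    Set.eq_univ_of_forall fun y => (em (y ∈ U)).imp id fun hy => hUW hy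
  refine ⟨g, ?_, hgU, hgW⟩
  rw [← continuousOn_univ, ← hUW']
  exact hUon.union_of_isOpen hWon hU hW

variable [CompactSpace K] [MeasurableSpace K] [OpensMeasurableSpace K]

lemma CondB.eq_of_forall_le (hB : CondB U Φ) (hM : IsMarkovOperator Φ) {g : K → ℝ}
    (hg : Continuous g) (hsub : ∀ u : U, g u ≤ realMarkov Φ (fun v : U => g v) u) {z : K}
    (hz : z ∈ U) (hmax : ∀ x, g x ≤ g z) (x y : K) : g x = g y := by
  have hΦ := hM.apply_ofReal (boundedMeasurable_restrict_of_continuous U hg)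
  have h := hB ⟨fun y => (g y : ℂ), by fun_prop⟩ (fun _ => Complex.ofReal_im _)
    (fun u => by simpa [hΦ] using hsub u) ⟨z, hz, fun x => by simpa using hmax x⟩ x y
  simpa using h

lemma CondB.le_of_le_near_boundary (hB : CondB U Φ) (hM : IsMarkovOperator Φ) (hU : IsOpen U)
    (hne : (Uᶜ).Nonempty) {w : U → ℝ} (hwc : Continuous w) (hw : BoundedMeasurable w)
    (hsub : ∀ u, w u ≤ realMarkov Φ w u) {W : Set K} (hW : IsOpen W) (hUW : Uᶜ ⊆ W) {c : ℝ}
    (hc : ∀ u : U, u.1 ∈ W → w u ≤ c) (u : U) : w u ≤ c := by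
  obtain ⟨a, ha⟩ := hne
  obtain ⟨g, hg, hgU, hgW⟩ := hU.exists_continuous_extend_max hwc hW hUW hc
  have hgb := boundedMeasurable_restrict_of_continuous U hg
  have hsubg : ∀ v : U, g v ≤ realMarkov Φ (fun v : U => g v) v := by
    intro v
    rw [hgU v]
    refine max_le ((hsub v).trans (hM.realMarkov_mono hw hgb
      (fun v' => (le_max_left _ _).trans_eq (hgU v').symm) v)) ?_
    calc c = realMarkov Φ (fun _ => c) v := (hM.realMarkov_const c v).symm
      _ ≤ _ := hM.realMarkov_mono (boundedMeasurable_const c) hgb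
          (fun v' => (le_max_right _ _).trans_eq (hgU v').symm) v
  have : Nonempty K := ⟨a⟩
  obtain ⟨z, -, hz⟩ := isCompact_univ.exists_isMaxOn Set.univ_nonempty hg.continuousOn
  have hgz : g z ≤ c := by
    by_contra! hlt
    have hzU : z ∈ U := by
      by_contra hzU
      exact hlt.ne' (hgW z (hUW hzU))
    have h := hB.eq_of_forall_le hM hg hsubg hzU (fun x => hz (Set.mem_univ x)) a z
    rw [hgW a (hUW ha)] at h
    exact hlt.ne h
  calc w u ≤ g u := (le_max_left _ _).trans_eq (hgU u).symm
    _ ≤ g z := hz (Set.mem_univ _)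
    _ ≤ c := hgz

lemma CondA.exists_barrier (hA : CondA U Φ) (hM : IsMarkovOperator Φ) {p : K → ℝ}
    (hp : Continuous p) {x : K} (hx : x ∈ Uᶜ) (hpx : p x = 0) {ε : ℝ} (hε : 0 < ε) :
    ∃ β : K → ℝ, Continuous β ∧ p ≤ β ∧ β x < ε ∧ IsSuperharmonic Φ (fun v : U => β v) := by
  obtain ⟨η, hη, hηx, hηneg, hηsub⟩ := hA.exists_real hx
  have hηle : ∀ y, η y ≤ 0 := fun y => by
    rcases eq_or_ne y x with rfl | hy
    exacts [hηx.le, (hηneg y hy).le]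
  obtain ⟨M, hM'⟩ := (isCompact_range hp).bddAbove
  set S : Set K := {y | ε / 2 ≤ p y}
  have hSx : x ∉ S := fun h : ε / 2 ≤ p x => by linarith
  obtain ⟨δ, hδ, hδS⟩ := (isClosed_le continuous_const hp).isCompact.exists_forall_le'
    hη.neg.continuousOn (a := 0)
    fun y hy => neg_pos.2 (hηneg y (ne_of_mem_of_not_mem hy hSx))
  -- `-c η ≥ M` on `S`, and `ε / 2` dominates `p` off `S`
  set c : ℝ := max M 0 / δ
  have hc : 0 ≤ c := by positivity
  have hcδ : M ≤ c * δ := by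
    rw [div_mul_cancel₀ _ hδ.ne']
    exact le_max_left _ _
  refine ⟨fun y => ε / 2 + (-c) * η y, by fun_prop, fun y => ?_, by simp [hηx]; linarith,
    fun u => ?_⟩
  · by_cases hy : y ∈ S
    · have h1 : c * δ ≤ c * -η y := mul_le_mul_of_nonneg_left (hδS y hy) hc
      have h2 := hM' (Set.mem_range_self y)
      show p y ≤ ε / 2 + (-c) * η y
      nlinarith
    · have h1 := mul_nonpos_of_nonneg_of_nonpos hc (hηle y)
      have h2 : p y < ε / 2 := not_le.1 hy
      show p y ≤ ε / 2 + (-c) * η y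
      nlinarith
  · have h := hM.realMarkov_const_add_mul (boundedMeasurable_restrict_of_continuous U hη)
      (ε / 2) (-c) u
    show realMarkov Φ (fun v : U => ε / 2 + (-c) * η v) u ≤ ε / 2 + (-c) * η u
    rw [h]
    nlinarith [mul_le_mul_of_nonneg_left (hηsub u) hc]

lemma CondA.exists_superharmonic_majorant (hA : CondA U Φ) (hM : IsMarkovOperator Φ)
    (hU : IsOpen U) {p : K → ℝ} (hp : Continuous p) (hp0 : ∀ x ∈ Uᶜ, p x = 0) {ε : ℝ}
    (hε : 0 < ε) :
    ∃ s : K → ℝ, Continuous s ∧ p ≤ s ∧ (∀ x ∈ Uᶜ, s x < ε) ∧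
      IsSuperharmonic Φ (fun v : U => s v) := by
  refine hU.isClosed_compl.isCompact.induction_on (p := fun S => ∃ s : K → ℝ, Continuous s ∧
    p ≤ s ∧ (∀ x ∈ S, s x < ε) ∧ IsSuperharmonic Φ (fun v : U => s v)) ?_ ?_ ?_ ?_
  · obtain ⟨M, hM'⟩ := (isCompact_range hp).bddAbove
    exact ⟨fun _ => M, continuous_const, fun y => hM' (Set.mem_range_self y), by simp,
      fun u => (hM.realMarkov_const M u).le⟩
  · rintro S T hST ⟨s, hs, hps, hsT, hsup⟩
    exact ⟨s, hs, hps, fun x hx => hsT x (hST hx), hsup⟩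
  · rintro S T ⟨s, hs, hps, hsS, hsup⟩ ⟨t, ht, hpt, htT, htup⟩
    have hmb := boundedMeasurable_restrict_of_continuous U (hs.min ht)
    refine ⟨fun y => min (s y) (t y), hs.min ht, fun y => le_min (hps y) (hpt y), ?_,
      fun u => le_min ?_ ?_⟩
    · rintro x (hx | hx)
      exacts [min_lt_of_left_lt (hsS x hx), min_lt_of_right_lt (htT x hx)]
    · exact (hM.realMarkov_mono hmb (boundedMeasurable_restrict_of_continuous U hs)
        (fun v => min_le_left _ _) u).trans (hsup u)
    · exact (hM.realMarkov_mono hmb (boundedMeasurable_restrict_of_continuous U ht)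
        (fun v => min_le_right _ _) u).trans (htup u)
  · intro x hx
    obtain ⟨β, hβ, hpβ, hβx, hsup⟩ := hA.exists_barrier hM hp hx (hp0 x hx) hε
    exact ⟨{y | β y < ε},
      mem_nhdsWithin_of_mem_nhds ((isOpen_lt hβ continuous_const).mem_nhds hβx),
      β, hβ, hpβ, fun y hy => hy, hsup⟩

lemma eventually_iterate_realMarkov_lt (hM : IsMarkovOperator Φ) (hSF : HasStrongFeller Φ)
    (hB : CondB U Φ) (hU : IsOpen U) (hne : (Uᶜ).Nonempty) {s : K → ℝ} (hs : Continuous s)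
    (hsup : IsSuperharmonic Φ (fun v : U => s v)) {ε : ℝ} (hsε : ∀ x ∈ Uᶜ, s x < ε)
    {δ : ℝ} (hδ : 0 < δ) :
    ∀ᶠ n in atTop, ∀ u : U, (realMarkov Φ)^[n] (fun v : U => s v) u < ε + δ := by
  have hsb := boundedMeasurable_restrict_of_continuous U hs
  obtain ⟨w, hwc, hw, hfix, hlim⟩ := hsup.exists_tendsto_iterate hM hSF hsb
  have hanti := hsup.antitone_iterate hM hSF hsb
  have hws : ∀ u, w u ≤ s u := fun u =>
    le_of_tendsto' (hlim u) fun n => hanti u (Nat.zero_le n)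
  have hwε : ∀ u, w u ≤ ε := hB.le_of_le_near_boundary hM hU hne hwc hw (fun u => (hfix u).ge)
    (isOpen_lt hs continuous_const) hsε fun u hu => (hws u).trans hu.le
  set S : Set U := {u | ε ≤ s u}
  have hS : IsCompact S := by
    rw [Subtype.isCompact_iff]
    convert (isClosed_le continuous_const hs).isCompact using 1
    ext y
    constructor
    · rintro ⟨u, hu, rfl⟩
      exact hu
    · intro hy
      exact ⟨⟨y, by_contra fun hyU => (hsε y hyU).not_ge hy⟩, hy, rfl⟩
  have hunif := Antitone.tendstoUniformlyOn_of_forall_tendsto hS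
    (fun n => (continuous_iterate_realMarkov hM hSF hsb (hs.comp continuous_subtype_val)
      n).continuousOn) (fun u _ => hanti u) hwc.continuousOn (fun u _ => hlim u)
  filter_upwards [Metric.tendstoUniformlyOn_iff.1 hunif δ hδ] with n hn u
  by_cases hu : u ∈ S
  · have h := hn u hu
    rw [Real.dist_eq, abs_sub_lt_iff] at h
    linarith [hwε u]
  · exact (hanti u (Nat.zero_le n)).trans_lt ((not_le.1 hu).trans (lt_add_of_pos_right ε hδ))

end Boundary

theorem stmt1_general {K : Type*} [MetricSpace K] [CompactSpace K]
    [MeasurableSpace K] [BorelSpace K]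
    (U : Set K) (hUopen : IsOpen U)
    (hbd : ∃ a b : K, a ∈ Uᶜ ∧ b ∈ Uᶜ ∧ a ≠ b)
    (Φ : (↥U → ℂ) → (↥U → ℂ))
    (hM : IsMarkovOperator Φ) (hSF : HasStrongFeller Φ)
    (hA : CondA U Φ) (hB : CondB U Φ)
    (f : C(↥(Uᶜ), ℂ)) (G : C(K, ℂ))
    (hGfix : ∀ u : ↥U, Φ (fun v : ↥U => G v.1) u = G u.1)
    (hGf : ∀ x : ↥(Uᶜ), G x.1 = f x)
    (F : C(K, ℂ)) (hFf : ∀ x : ↥(Uᶜ), F x.1 = f x) :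
    TendstoUniformly (fun n (u : ↥U) => Φ^[n] (fun v : ↥U => F v.1) u)
      (fun u : ↥U => G u.1) atTop := by
  obtain ⟨a, -, ha, -⟩ := hbd
  set d : U → ℂ := fun v => F v - G v
  have hd : BoundedMeasurable d :=
    boundedMeasurable_restrict_of_continuous U (A := fun y => F y - G y) (by fun_prop)
  have hF : ∀ n, Φ^[n] (fun v : U => F v) = fun v => Φ^[n] d v + G v := fun n => by
    rw [← hM.iterate_add_of_fixed hSF hd (boundedMeasurable_restrict_of_continuous U G.continuous)
      hGfix n]
    simp only [d, sub_add_cancel]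
  rw [Metric.tendstoUniformly_iff]
  intro ε hε
  obtain ⟨s, hs, hds, hsε, hsup⟩ := hA.exists_superharmonic_majorant hM hUopen
    (p := fun y => ‖F y - G y‖) (by fun_prop)
    (fun x hx => by simp [hFf ⟨x, hx⟩, hGf ⟨x, hx⟩]) (half_pos hε)
  filter_upwards [eventually_iterate_realMarkov_lt hM hSF hB hUopen ⟨a, ha⟩ hs hsup hsε
    (half_pos hε)] with n hn u
  calc dist (G u) (Φ^[n] (fun v : U => F v) u) = ‖Φ^[n] d u‖ := by
        rw [hF, dist_eq_norm, sub_add_cancel_right, norm_neg]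
    _ ≤ (realMarkov Φ)^[n] (fun v : U => s v) u :=
        hM.norm_iterate_le hSF hd (boundedMeasurable_restrict_of_continuous U hs)
          (fun v => hds v) n u
    _ < ε := by linarith [hn u]

/-- If `G ∈ C(K)` is the harmonic extension of `f ∈ C(∂U)` and
`F ∈ C(K)` is any continuous extension of `f`, then `Φⁿ (F_U) → G_U`
uniformly on `U`. -/
theorem stmt1 {K : Type*} [MetricSpace K] [CompactSpace K]
    [MeasurableSpace K] [BorelSpace K]
    (U : Set K) (hUopen : IsOpen U) (hUdense : Dense U)
    (hbd : ∃ a b : K, a ∈ Uᶜ ∧ b ∈ Uᶜ ∧ a ≠ b)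
    (Φ : (↥U → ℂ) → (↥U → ℂ))
    (hM : IsMarkovOperator Φ) (hSF : HasStrongFeller Φ)
    (hA : CondA U Φ) (hB : CondB U Φ)
    (f : C(↥(Uᶜ), ℂ)) (G : C(K, ℂ))
    (hGfix : ∀ u : ↥U, Φ (fun v : ↥U => G v.1) u = G u.1)
    (hGf : ∀ x : ↥(Uᶜ), G x.1 = f x)
    (F : C(K, ℂ)) (hFf : ∀ x : ↥(Uᶜ), F x.1 = f x) :
    TendstoUniformly (fun n (u : ↥U) => Φ^[n] (fun v : ↥U => F v.1) u)
      (fun u : ↥U => G u.1) atTop :=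
  stmt1_general U hUopen hbd Φ hM hSF hA hB f G hGfix hGf F hFf
end

section
/- If G₁, G₂ ∈ C(K) satisfy Φ((G₁)_U) = (G₁)_U, Φ((G₂)_U) = (G₂)_U, and G₁(x) = G₂(x) for all x ∈ ∂U, then G₁ = G₂ on K. -/
open MeasureTheory Filter Topology ComplexOrder

/-!
Since `Φ` is integration against probability measures, it commutes with real-linear maps
of `ℂ`, so with `g = G₁ - G₂` also every `c • g` and every `Re (c • g)` is `Φ`-harmonic
and vanishes on `∂U`. By the maximum principle (B), a real harmonic function vanishing on
`∂U` is `≤ 0`: its maximum is attained either on `∂U`, where it is `0`, or in `U`, where it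
forces the function to be constant, hence `0`. Taking `c = conj (g x)` gives `‖g x‖² ≤ 0`.
-/

def IsHarmonic {K : Type*} [TopologicalSpace K] (U : Set K) (Φ : (↥U → ℂ) → (↥U → ℂ))
    (g : C(K, ℂ)) : Prop :=
  ∀ u : ↥U, Φ (fun v : ↥U => g v.1) u = g u.1

lemma Measurable.integrable_of_bounded {α : Type*} [MeasurableSpace α] {f : α → ℂ}
    (hf : Measurable f) (hfb : ∃ C : ℝ, ∀ y, ‖f y‖ ≤ C)
    (μ : Measure α) [IsFiniteMeasure μ] :
    Integrable f μ :=
  let ⟨C, hC⟩ := hfb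
  .of_bound hf.aestronglyMeasurable C (.of_forall hC)

namespace IsMarkovOperator

variable {U : Type*} [MeasurableSpace U] {Φ : (U → ℂ) → (U → ℂ)}

lemma map_sub (hM : IsMarkovOperator Φ) {f g : U → ℂ}
    (hf : Measurable f) (hfb : ∃ C : ℝ, ∀ y, ‖f y‖ ≤ C)
    (hg : Measurable g) (hgb : ∃ C : ℝ, ∀ y, ‖g y‖ ≤ C) :
    Φ (f - g) = Φ f - Φ g := by
  have hfgb : ∃ C : ℝ, ∀ y, ‖(f - g) y‖ ≤ C := by
    obtain ⟨C, hC⟩ := hfb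
    obtain ⟨D, hD⟩ := hgb
    exact ⟨C + D, fun y => (norm_sub_le _ _).trans (add_le_add (hC y) (hD y))⟩
  funext x
  obtain ⟨P, _, hP⟩ := hM x
  rw [Pi.sub_apply, hP _ (hf.sub hg) hfgb, hP f hf hfb, hP g hg hgb]
  exact integral_sub (hf.integrable_of_bounded hfb P) (hg.integrable_of_bounded hgb P)

lemma map_clm (hM : IsMarkovOperator Φ) (L : ℂ →L[ℝ] ℂ) {f : U → ℂ}
    (hf : Measurable f) (hfb : ∃ C : ℝ, ∀ y, ‖f y‖ ≤ C) :
    Φ (fun y => L (f y)) = fun x => L (Φ f x) := by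
  have hLfb : ∃ C : ℝ, ∀ y, ‖L (f y)‖ ≤ C := by
    obtain ⟨C, hC⟩ := hfb
    exact ⟨‖L‖ * C, fun y => (L.le_opNorm _).trans (by gcongr; exact hC y)⟩
  funext x
  obtain ⟨P, _, hP⟩ := hM x
  rw [hP (fun y => L (f y)) (L.continuous.measurable.comp hf) hLfb, hP f hf hfb]
  exact L.integral_comp_comm (hf.integrable_of_bounded hfb P)

end IsMarkovOperator

namespace ContinuousMap

lemma measurable_restrict {K : Type*} [TopologicalSpace K] [MeasurableSpace K]
    [OpensMeasurableSpace K] {U : Set K} (g : C(K, ℂ)) : Measurable (fun v : ↥U => g v.1) :=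
  (g.continuous.comp continuous_subtype_val).measurable

lemma bounded_restrict {K : Type*} [TopologicalSpace K] [CompactSpace K] {U : Set K}
    (g : C(K, ℂ)) : ∃ C : ℝ, ∀ v : ↥U, ‖g v.1‖ ≤ C :=
  ⟨‖g‖, fun v => g.norm_coe_le_norm v.1⟩

end ContinuousMap

namespace IsHarmonic

variable {K : Type*} [TopologicalSpace K] [CompactSpace K] [MeasurableSpace K]
  [OpensMeasurableSpace K] {U : Set K} {Φ : (↥U → ℂ) → (↥U → ℂ)}

lemma sub (hM : IsMarkovOperator Φ) {f g : C(K, ℂ)}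
    (hf : IsHarmonic U Φ f) (hg : IsHarmonic U Φ g) : IsHarmonic U Φ (f - g) := fun u => by
  have h := congrFun (hM.map_sub f.measurable_restrict f.bounded_restrict
    g.measurable_restrict g.bounded_restrict) u
  rw [Pi.sub_apply, hf u, hg u] at h
  exact h

lemma comp_clm (hM : IsMarkovOperator Φ) (L : ℂ →L[ℝ] ℂ)
    {g : C(K, ℂ)} (hg : IsHarmonic U Φ g) :
    IsHarmonic U Φ ((⟨L, L.continuous⟩ : C(ℂ, ℂ)).comp g) := fun u =>
  (congrFun (hM.map_clm L g.measurable_restrict g.bounded_restrict) u).trans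
    (congrArg L (hg u))

lemma re_le_zero (hM : IsMarkovOperator Φ) (hB : CondB U Φ)
    {a : K} (ha : a ∈ Uᶜ) {g : C(K, ℂ)} (hg : IsHarmonic U Φ g)
    (hg0 : ∀ x ∈ Uᶜ, g x = 0) (x : K) : (g x).re ≤ 0 := by
  set r := (⟨_, (Complex.ofRealCLM.comp Complex.reCLM).continuous⟩ : C(ℂ, ℂ)).comp g
  have hr : ∀ y, r y = ((g y).re : ℂ) := fun _ => rfl
  have hr_harm : IsHarmonic U Φ r := hg.comp_clm hM _
  have hr_im : ∀ y, (r y).im = 0 := fun y => by rw [hr, Complex.ofReal_im]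
  obtain ⟨z, -, hz⟩ := isCompact_univ.exists_isMaxOn ⟨a, trivial⟩
    (Complex.continuous_re.comp g.continuous).continuousOn
  by_cases hzU : z ∈ U
  · have hr_le : ∀ y, r y ≤ r z := fun y => by
      rw [hr, hr, Complex.real_le_real]; exact hz trivial
    have hconst := congrArg Complex.re
      (hB r hr_im (fun u => (hr_harm u).ge) ⟨z, hzU, hr_le⟩ x a)
    simp only [hr, hg0 a ha, Complex.ofReal_re, Complex.zero_re] at hconst
    exact hconst.le
  · simpa [hg0 z hzU] using hz (Set.mem_univ x)

lemma eq_zero_of_boundary (hM : IsMarkovOperator Φ) (hB : CondB U Φ)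
    {a : K} (ha : a ∈ Uᶜ) {g : C(K, ℂ)} (hg : IsHarmonic U Φ g)
    (hg0 : ∀ x ∈ Uᶜ, g x = 0) (x : K) : g x = 0 := by
  let L : ℂ →L[ℝ] ℂ := ContinuousLinearMap.mul ℝ ℂ ((starRingEnd ℂ) (g x))
  have hLg := (hg.comp_clm hM L).re_le_zero hM hB ha (fun y hy => by simp [L, hg0 y hy]) x
  have hnorm : ((⟨L, L.continuous⟩ : C(ℂ, ℂ)).comp g x).re = Complex.normSq (g x) := by
    simp [L, mul_comm, Complex.mul_conj]
  rw [hnorm] at hLg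
  exact Complex.normSq_eq_zero.1 (le_antisymm hLg (Complex.normSq_nonneg _))

end IsHarmonic

theorem stmt2_general {K : Type*} [MetricSpace K] [CompactSpace K]
    [MeasurableSpace K] [BorelSpace K]
    (U : Set K)
    (hbd : ∃ a b : K, a ∈ Uᶜ ∧ b ∈ Uᶜ ∧ a ≠ b)
    (Φ : (↥U → ℂ) → (↥U → ℂ))
    (hM : IsMarkovOperator Φ)
    (hB : CondB U Φ)
    (G₁ G₂ : C(K, ℂ))
    (hG₁ : ∀ u : ↥U, Φ (fun v : ↥U => G₁ v.1) u = G₁ u.1)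
    (hG₂ : ∀ u : ↥U, Φ (fun v : ↥U => G₂ v.1) u = G₂ u.1)
    (hbdry : ∀ x ∈ Uᶜ, G₁ x = G₂ x) :
    ∀ x : K, G₁ x = G₂ x := by
  obtain ⟨a, -, ha, -⟩ := hbd
  have hdiff : IsHarmonic U Φ (G₁ - G₂) := IsHarmonic.sub hM hG₁ hG₂
  intro x
  refine sub_eq_zero.1 (hdiff.eq_zero_of_boundary hM hB ha (fun y hy => ?_) x)
  simp [hbdry y hy]

/-- Two `Φ`-harmonic functions in `C(K)` agreeing on `∂U`
agree on all of `K`. -/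
theorem stmt2 {K : Type*} [MetricSpace K] [CompactSpace K]
    [MeasurableSpace K] [BorelSpace K]
    (U : Set K) (hUopen : IsOpen U) (hUdense : Dense U)
    (hbd : ∃ a b : K, a ∈ Uᶜ ∧ b ∈ Uᶜ ∧ a ≠ b)
    (Φ : (↥U → ℂ) → (↥U → ℂ))
    (hM : IsMarkovOperator Φ) (hSF : HasStrongFeller Φ)
    (hA : CondA U Φ) (hB : CondB U Φ)
    (G₁ G₂ : C(K, ℂ))
    (hG₁ : ∀ u : ↥U, Φ (fun v : ↥U => G₁ v.1) u = G₁ u.1)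
    (hG₂ : ∀ u : ↥U, Φ (fun v : ↥U => G₂ v.1) u = G₂ u.1)
    (hbdry : ∀ x ∈ Uᶜ, G₁ x = G₂ x) :
    ∀ x : K, G₁ x = G₂ x :=
  stmt2_general U hbd Φ hM hB G₁ G₂ hG₁ hG₂ hbdry
end

section
/- If h ∈ C(K) satisfies Ψ(h) = h, then Ψ(|h|²) ≥ |h|² on K, the sequence {Ψ^n(|h|²)}_{n≥1} converges uniformly on K to a function π(|h|²) ∈ C(K), and π(|h|²) ≥ |h|² on K. -/
open MeasureTheory Filter Topology ComplexOrder

/-!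
Write `q = |h|²` and `S f x = ∫ f dμₓ`, where `μₓ` is the measure representing `Φ` at `x ∈ U`
and the Dirac mass at `x ∈ ∂U`, so that `Ψ` acts on real functions as `S`. Since `h = Ψ h` is an
average of `h`, Jensen's inequality gives `q ≤ S q`; hence the iterates `Sⁿ q` increase to a
bounded limit `g`, which is `S`-invariant by monotone convergence and therefore continuous on `U`
by the strong Feller property. At a boundary point `x₀`, a barrier `r` from (A) gives for every
`ε > 0` a continuous `w = q x₀ + ε - L r ≥ q` with `S w ≤ w`, so `q ≤ Sⁿ q ≤ g ≤ w` while
`Sⁿ q x₀ = g x₀ = q x₀`: this squeezes `Sⁿ q` and `g` into continuity at `x₀`. Dini's theorem then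
makes the monotone convergence uniform.
-/

theorem exists_le_add_sub_mul_of_neg {X : Type*} [TopologicalSpace X] [CompactSpace X]
    {q r : X → ℝ} {x₀ : X} (hq : Continuous q) (hr : Continuous r) (hr₀ : r x₀ = 0)
    (hneg : ∀ y ≠ x₀, r y < 0) {ε : ℝ} (hε : 0 < ε) :
    ∃ L, 0 ≤ L ∧ ∀ y, q y ≤ q x₀ + ε - L * r y := by
  have hr_nonpos : ∀ y, r y ≤ 0 := fun y => by
    rcases eq_or_ne y x₀ with rfl | hy
    exacts [hr₀.le, (hneg y hy).le]
  set T := {y | q x₀ + ε ≤ q y}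
  have hrT : ∀ y ∈ T, 0 < -r y := fun y hy => neg_pos.2 <| hneg y fun h => by
    subst h; simp only [T, Set.mem_ofPred_eq] at hy; linarith
  -- `L` bounds `(q y - (q x₀ + ε)) / -r y` on the compact set `T`, which avoids `x₀`
  obtain ⟨L, hL⟩ := ((isClosed_le continuous_const hq).isCompact.image_of_continuousOn
    (((hq.sub (continuous_const (y := q x₀ + ε))).continuousOn.div hr.neg.continuousOn) fun y hy =>
      (hrT y hy).ne')).bddAbove
  refine ⟨max L 0, le_max_right _ _, fun y => ?_⟩
  have hLr := mul_le_mul_of_nonpos_right (le_max_right L 0) (hr_nonpos y)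
  by_cases hy : y ∈ T
  · have hquot := (div_le_iff₀ (hrT y hy)).1 (hL ⟨y, hy, rfl⟩)
    have hmax := mul_le_mul_of_nonpos_right (le_max_left L 0) (hr_nonpos y)
    simp only [Pi.sub_apply] at hquot
    linarith
  · simp only [T, Set.mem_ofPred_eq, not_le] at hy
    linarith

theorem sq_norm_integral_le_integral_sq_norm {α E : Type*} [MeasurableSpace α]
    [NormedAddCommGroup E] [NormedSpace ℝ E] [CompleteSpace E] {ν : Measure α}
    [IsProbabilityMeasure ν] {f : α → E} (hf : Integrable f ν)
    (hf2 : Integrable (fun x => ‖f x‖ ^ 2) ν) :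
    ‖∫ x, f x ∂ν‖ ^ 2 ≤ ∫ x, ‖f x‖ ^ 2 ∂ν :=
  (convexOn_univ_norm.pow (fun _ _ => norm_nonneg _) 2).map_integral_le
    (continuous_norm.pow 2).continuousOn isClosed_univ (.of_forall fun _ => trivial) hf hf2

theorem continuousAt_of_le_of_forall_le {X : Type*} [TopologicalSpace X] {F q : X → ℝ}
    {x₀ : X} (hq : ContinuousAt q x₀) (hqF : q ≤ F) (hx₀ : F x₀ = q x₀)
    (hmaj : ∀ ε > 0, ∃ w : X → ℝ, ContinuousAt w x₀ ∧ w x₀ ≤ q x₀ + ε ∧ F ≤ w) :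
    ContinuousAt F x₀ := by
  rw [ContinuousAt, tendsto_order]
  refine ⟨fun a ha => ?_, fun b hb => ?_⟩
  · filter_upwards [hq.eventually (lt_mem_nhds (hx₀ ▸ ha))] with y hy using hy.trans_le (hqF y)
  · obtain ⟨w, hw, hwx, hFw⟩ := hmaj ((b - q x₀) / 2) (by linarith)
    filter_upwards [hw.eventually (gt_mem_nhds (show w x₀ < b by linarith))] with y hy
    exact (hFw y).trans_lt hy

section KernelAverage

variable {K : Type*} [MeasurableSpace K]

def IsBoundedMeasurable (f : K → ℝ) : Prop :=
  Measurable f ∧ ∃ C, ∀ y, ‖f y‖ ≤ C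

theorem IsBoundedMeasurable.integrable {f : K → ℝ} (hf : IsBoundedMeasurable f)
    (ν : Measure K) [IsFiniteMeasure ν] : Integrable f ν :=
  let ⟨C, hC⟩ := hf.2
  .of_bound hf.1.aestronglyMeasurable C (.of_forall hC)

noncomputable def kernelAverage (μ : K → Measure K) (f : K → ℝ) : K → ℝ :=
  fun x => ∫ y, f y ∂μ x

variable {μ : K → Measure K} [∀ x, IsProbabilityMeasure (μ x)]

theorem kernelAverage_const (c : ℝ) : kernelAverage μ (fun _ => c) = fun _ => c := by
  ext x
  simp [kernelAverage]

theorem kernelAverage_mono {f g : K → ℝ} (hf : IsBoundedMeasurable f)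
    (hg : IsBoundedMeasurable g) (hfg : f ≤ g) : kernelAverage μ f ≤ kernelAverage μ g :=
  fun _ => integral_mono (hf.integrable _) (hg.integrable _) hfg

theorem kernelAverage_const_sub_mul {r : K → ℝ} (hr : IsBoundedMeasurable r) (a c : ℝ) :
    kernelAverage μ (fun y => a - c * r y) = fun x => a - c * kernelAverage μ r x := by
  ext x
  simp [kernelAverage, integral_sub (integrable_const a) ((hr.integrable _).const_mul c),
    integral_const_mul]

theorem tendsto_kernelAverage_of_monotone {F : ℕ → K → ℝ} {G : K → ℝ}
    (hF : ∀ n, IsBoundedMeasurable (F n)) (hG : IsBoundedMeasurable G) (hmono : Monotone F)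
    (hlim : ∀ y, Tendsto (F · y) atTop (𝓝 (G y))) (x : K) :
    Tendsto (fun n => kernelAverage μ (F n) x) atTop (𝓝 (kernelAverage μ G x)) :=
  integral_tendsto_of_tendsto_of_monotone (fun n => (hF n).integrable _) (hG.integrable _)
    (.of_forall fun _ _ _ h => hmono h _) (.of_forall hlim)

end KernelAverage

section StoppedFellerKernel

variable {K : Type*} [MeasurableSpace K] [TopologicalSpace K]

theorem Continuous.isBoundedMeasurable [OpensMeasurableSpace K]
    [CompactSpace K] {f : K → ℝ} (hf : Continuous f) : IsBoundedMeasurable f :=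
  let ⟨C, hC⟩ := (isCompact_range hf.norm).bddAbove
  ⟨hf.measurable, C, fun y => hC ⟨y, rfl⟩⟩

structure IsStoppedFellerKernel (U : Set K) (μ : K → Measure K) : Prop where
  eq_dirac : ∀ x ∉ U, μ x = Measure.dirac x
  continuousOn : ∀ f, IsBoundedMeasurable f → ContinuousOn (kernelAverage μ f) U

def IsBarrierAt (μ : K → Measure K) (x₀ : K) (r : K → ℝ) : Prop :=
  Continuous r ∧ r x₀ = 0 ∧ (∀ y ≠ x₀, r y < 0) ∧ r ≤ kernelAverage μ r

namespace IsStoppedFellerKernel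

variable {U : Set K} {μ : K → Measure K}

theorem kernelAverage_eq_of_notMem (hμ : IsStoppedFellerKernel U μ) {f : K → ℝ}
    (hf : Measurable f) {x : K} (hx : x ∉ U) : kernelAverage μ f x = f x := by
  rw [kernelAverage, hμ.eq_dirac x hx, integral_dirac' _ _ hf.stronglyMeasurable]

variable [OpensMeasurableSpace K] [∀ x, IsProbabilityMeasure (μ x)]

theorem isBoundedMeasurable_kernelAverage
    (hμ : IsStoppedFellerKernel U μ) (hU : MeasurableSet U) {f : K → ℝ}
    (hf : IsBoundedMeasurable f) : IsBoundedMeasurable (kernelAverage μ f) := by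
  obtain ⟨C, hC⟩ := hf.2
  refine ⟨measurable_of_restrict_of_restrict_compl hU ?_ ?_, C, fun x => ?_⟩
  · exact (continuousOn_iff_continuous_domRestrict.1 (hμ.continuousOn f hf)).measurable
  · have : Uᶜ.domRestrict (kernelAverage μ f) = Uᶜ.domRestrict f :=
      funext fun x => hμ.kernelAverage_eq_of_notMem hf.1 x.2
    exact this ▸ hf.1.comp measurable_subtype_coe
  · simpa [kernelAverage] using norm_integral_le_of_norm_le_const (μ := μ x) (.of_forall hC)

theorem isBoundedMeasurable_iterate
    (hμ : IsStoppedFellerKernel U μ) (hU : MeasurableSet U) {f : K → ℝ}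
    (hf : IsBoundedMeasurable f) (n : ℕ) : IsBoundedMeasurable ((kernelAverage μ)^[n] f) := by
  induction n with
  | zero => exact hf
  | succ n ih =>
    rw [Function.iterate_succ_apply']
    exact hμ.isBoundedMeasurable_kernelAverage hU ih

theorem iterate_eq_of_notMem
    (hμ : IsStoppedFellerKernel U μ) (hU : MeasurableSet U) {f : K → ℝ}
    (hf : IsBoundedMeasurable f) (n : ℕ) {x : K} (hx : x ∉ U) :
    (kernelAverage μ)^[n] f x = f x := by
  induction n with
  | zero => rfl
  | succ n ih =>
    rw [Function.iterate_succ_apply', hμ.kernelAverage_eq_of_notMem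
      (hμ.isBoundedMeasurable_iterate hU hf n).1 hx, ih]

theorem iterate_le_of_kernelAverage_le
    (hμ : IsStoppedFellerKernel U μ) (hU : MeasurableSet U) {f w : K → ℝ}
    (hf : IsBoundedMeasurable f) (hw : IsBoundedMeasurable w) (hSw : kernelAverage μ w ≤ w)
    (hfw : f ≤ w) (n : ℕ) : (kernelAverage μ)^[n] f ≤ w := by
  induction n with
  | zero => exact hfw
  | succ n ih =>
    rw [Function.iterate_succ_apply']
    exact (kernelAverage_mono (hμ.isBoundedMeasurable_iterate hU hf n) hw ih).trans hSw

theorem monotone_iterate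
    (hμ : IsStoppedFellerKernel U μ) (hU : MeasurableSet U) {f : K → ℝ}
    (hf : IsBoundedMeasurable f) (hsub : f ≤ kernelAverage μ f) :
    Monotone fun n => (kernelAverage μ)^[n] f := by
  refine monotone_nat_of_le_succ fun n => ?_
  rw [Function.iterate_succ_apply]
  induction n with
  | zero => exact hsub
  | succ n ih =>
    rw [Function.iterate_succ_apply', Function.iterate_succ_apply']
    exact kernelAverage_mono (hμ.isBoundedMeasurable_iterate hU hf n)
      (hμ.isBoundedMeasurable_iterate hU (hμ.isBoundedMeasurable_kernelAverage hU hf) n) ih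

theorem exists_tendsto_iterate (hμ : IsStoppedFellerKernel U μ) (hU : MeasurableSet U)
    {f : K → ℝ} (hf : IsBoundedMeasurable f) (hsub : f ≤ kernelAverage μ f) :
    ∃ g, IsBoundedMeasurable g ∧ kernelAverage μ g = g ∧
      (∀ x, Tendsto (fun n => (kernelAverage μ)^[n] f x) atTop (𝓝 (g x))) ∧
      ∀ w, IsBoundedMeasurable w → kernelAverage μ w ≤ w → f ≤ w → g ≤ w := by
  obtain ⟨C, hC⟩ := hf.2
  have hfC : f ≤ fun _ => C := fun y => (Real.le_norm_self _).trans (hC y)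
  have hiter := hμ.isBoundedMeasurable_iterate hU hf
  have hmono := hμ.monotone_iterate hU hf hsub
  have hle n := hμ.iterate_le_of_kernelAverage_le hU hf ⟨measurable_const, ‖C‖, fun _ => le_rfl⟩
    (kernelAverage_const C).le hfC n
  have hbdd x : BddAbove (Set.range fun n => (kernelAverage μ)^[n] f x) :=
    ⟨C, by rintro _ ⟨n, rfl⟩; exact hle n x⟩
  set g := fun x => ⨆ n, (kernelAverage μ)^[n] f x
  have hlim x : Tendsto (fun n => (kernelAverage μ)^[n] f x) atTop (𝓝 (g x)) :=
    tendsto_atTop_ciSup (fun _ _ h => hmono h x) (hbdd x)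
  have hg : IsBoundedMeasurable g := by
    refine ⟨measurable_of_tendsto_metrizable (fun n => (hiter n).1) (tendsto_pi_nhds.2 hlim),
      C, fun x => Real.norm_eq_abs _ ▸ abs_le.2 ⟨?_, ciSup_le fun n => hle n x⟩⟩
    exact (neg_le_of_abs_le ((Real.norm_eq_abs _) ▸ hC x)).trans (le_ciSup (hbdd x) 0)
  refine ⟨g, hg, funext fun x => ?_, hlim, fun w hw hSw hfw x =>
    ciSup_le fun n => hμ.iterate_le_of_kernelAverage_le hU hf hw hSw hfw n x⟩
  refine tendsto_nhds_unique (tendsto_kernelAverage_of_monotone hiter hg hmono hlim x) ?_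
  simpa only [Function.comp_def, Function.iterate_succ_apply'] using
    (hlim x).comp (tendsto_add_atTop_nat 1)

end IsStoppedFellerKernel

end StoppedFellerKernel

section Barrier

variable {K : Type*} [MeasurableSpace K] [TopologicalSpace K] [OpensMeasurableSpace K]
  [CompactSpace K] {μ : K → Measure K} [∀ x, IsProbabilityMeasure (μ x)]

theorem IsBarrierAt.exists_superharmonic_majorant {x₀ : K} {r : K → ℝ} (hr : IsBarrierAt μ x₀ r)
    {q : K → ℝ} (hq : Continuous q) {ε : ℝ} (hε : 0 < ε) :
    ∃ w, Continuous w ∧ w x₀ = q x₀ + ε ∧ q ≤ w ∧ kernelAverage μ w ≤ w := by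
  obtain ⟨hrc, hr₀, hneg, hsub⟩ := hr
  obtain ⟨L, hL, hqw⟩ := exists_le_add_sub_mul_of_neg hq hrc hr₀ hneg hε
  refine ⟨fun y => q x₀ + ε - L * r y, by fun_prop, by simp [hr₀], hqw, fun x => ?_⟩
  rw [kernelAverage_const_sub_mul hrc.isBoundedMeasurable]
  exact sub_le_sub_left (mul_le_mul_of_nonneg_left (hsub x) hL) _

theorem continuous_of_le_of_le_superharmonic {U : Set K} (hU : IsOpen U)
    (hbar : ∀ x ∉ U, ∃ r, IsBarrierAt μ x r) {q F : K → ℝ} (hq : Continuous q)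
    (hFU : ContinuousOn F U) (hqF : q ≤ F) (hFq : ∀ x ∉ U, F x = q x)
    (hFw : ∀ w, Continuous w → q ≤ w → kernelAverage μ w ≤ w → F ≤ w) : Continuous F := by
  refine continuous_iff_continuousAt.2 fun x => ?_
  by_cases hx : x ∈ U
  · exact hFU.continuousAt (hU.mem_nhds hx)
  obtain ⟨r, hr⟩ := hbar x hx
  refine continuousAt_of_le_of_forall_le hq.continuousAt hqF (hFq x hx) fun ε hε => ?_
  obtain ⟨w, hw, hwx, hqw, hSw⟩ := hr.exists_superharmonic_majorant hq hε
  exact ⟨w, hw.continuousAt, hwx.le, hFw w hw hqw hSw⟩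

theorem IsStoppedFellerKernel.exists_tendstoUniformly_iterate {U : Set K}
    (hμ : IsStoppedFellerKernel U μ) (hU : IsOpen U) (hbar : ∀ x ∉ U, ∃ r, IsBarrierAt μ x r)
    {q : K → ℝ} (hq : Continuous q) (hsub : q ≤ kernelAverage μ q) :
    ∃ g, Continuous g ∧ TendstoUniformly (fun n => (kernelAverage μ)^[n] q) g atTop ∧ q ≤ g := by
  have hqb := hq.isBoundedMeasurable
  have hmono := hμ.monotone_iterate hU.measurableSet hqb hsub
  obtain ⟨g, hg, hSg, hlim, hgw⟩ := hμ.exists_tendsto_iterate hU.measurableSet hqb hsub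
  have hqg : q ≤ g := fun x => ge_of_tendsto' (hlim x) fun n => hmono (Nat.zero_le n) x
  have hcont (F : K → ℝ) := continuous_of_le_of_le_superharmonic (F := F) hU hbar hq
  have hiter_eq n x (hx : x ∉ U) := hμ.iterate_eq_of_notMem hU.measurableSet hqb n hx
  have hQ n : Continuous ((kernelAverage μ)^[n] q) := by
    refine hcont _ ?_ (hmono (Nat.zero_le n)) (hiter_eq n) fun w hw hqw hSw =>
      hμ.iterate_le_of_kernelAverage_le hU.measurableSet hqb hw.isBoundedMeasurable hSw hqw n
    cases n with
    | zero => exact hq.continuousOn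
    | succ n =>
      rw [Function.iterate_succ_apply']
      exact hμ.continuousOn _ (hμ.isBoundedMeasurable_iterate hU.measurableSet hqb n)
  have hgc : Continuous g := by
    refine hcont g (hSg ▸ hμ.continuousOn g hg) hqg (fun x hx => ?_) fun w hw hqw hSw =>
      hgw w hw.isBoundedMeasurable hSw hqw
    exact tendsto_nhds_unique (hlim x) (by simp only [hiter_eq _ x hx]; exact tendsto_const_nhds)
  exact ⟨g, hgc, Monotone.tendstoUniformly_of_forall_tendsto hQ hmono hgc hlim, hqg⟩

end Barrier

section MarkovOperator

variable {K : Type*} [MeasurableSpace K] {U : Set K}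

open Classical in
noncomputable def stoppedKernel (P : U → Measure U) (x : K) : Measure K :=
  if hx : x ∈ U then (P ⟨x, hx⟩).map Subtype.val else Measure.dirac x

instance {P : U → Measure U} [∀ u, IsProbabilityMeasure (P u)] (x : K) :
    IsProbabilityMeasure (stoppedKernel P x) := by
  unfold stoppedKernel
  split_ifs
  exacts [Measure.isProbabilityMeasure_map measurable_subtype_coe.aemeasurable, inferInstance]

def IsIntegralRepresentation (Φ : (U → ℂ) → U → ℂ) (P : U → Measure U) : Prop :=
  ∀ u f, Measurable f → (∃ C : ℝ, ∀ y, ‖f y‖ ≤ C) → Φ f u = ∫ y, f y ∂P u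

variable {Φ : (U → ℂ) → U → ℂ} {P : U → Measure U}

theorem psiFun_eq_integral (hU : MeasurableSet U)
    (hP : IsIntegralRepresentation Φ P)
    {f : K → ℂ} (hf : Measurable f) (hb : ∃ C : ℝ, ∀ y, ‖f y‖ ≤ C) (x : K) :
    psiFun U Φ f x = ∫ y, f y ∂stoppedKernel P x := by
  by_cases hx : x ∈ U
  · simp only [psiFun, stoppedKernel, dif_pos hx]
    rw [hP _ (fun v => f v) (hf.comp measurable_subtype_coe) (hb.imp fun C hC y => hC y),
      (MeasurableEmbedding.subtype_coe hU).integral_map]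
  · simp only [psiFun, stoppedKernel, dif_neg hx, integral_dirac' _ _ hf.stronglyMeasurable]

theorem psiFun_ofReal (hU : MeasurableSet U)
    (hP : IsIntegralRepresentation Φ P)
    {f : K → ℝ} (hf : IsBoundedMeasurable f) :
    psiFun U Φ (fun y => (f y : ℂ)) = fun x => (kernelAverage (stoppedKernel P) f x : ℂ) := by
  ext x
  rw [psiFun_eq_integral (f := fun y => (f y : ℂ)) hU hP (Complex.measurable_ofReal.comp hf.1)
    (hf.2.imp fun C hC y => by simpa using hC y), kernelAverage, integral_complex_ofReal]

variable [TopologicalSpace K]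

theorem isStoppedFellerKernel_stoppedKernel (hU : MeasurableSet U)
    (hP : IsIntegralRepresentation Φ P)
    (hSF : HasStrongFeller Φ) : IsStoppedFellerKernel U (stoppedKernel P) where
  eq_dirac x hx := dif_neg hx
  continuousOn f hf := by
    have hΦ := hSF (fun v => (f v : ℂ)) (Complex.measurable_ofReal.comp
      (hf.1.comp measurable_subtype_coe)) (hf.2.imp fun C hC y => by simpa using hC y)
    refine continuousOn_iff_continuous_domRestrict.2
      ((Complex.continuous_re.comp hΦ).congr fun u => ?_)
    have := congrFun (psiFun_ofReal hU hP hf) u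
    simp only [psiFun, dif_pos u.2, Subtype.coe_eta] at this
    exact (congrArg Complex.re this).trans (Complex.ofReal_re _)

variable [OpensMeasurableSpace K]

theorem CondA.exists_isBarrierAt [CompactSpace K] (hA : CondA U Φ) (hU : MeasurableSet U)
    (hP : IsIntegralRepresentation Φ P)
    {x₀ : K} (hx₀ : x₀ ∉ U) : ∃ r, IsBarrierAt (stoppedKernel P) x₀ r := by
  obtain ⟨b, hb₀, hneg, hsub⟩ := hA x₀ hx₀
  set r := fun y => (b y).re
  have hr : Continuous r := by fun_prop
  have hbr : (⇑b) = fun y => (r y : ℂ) := funext fun y => by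
    have hle : b y ≤ 0 := (eq_or_ne y x₀).elim (fun h => (h ▸ hb₀).le) fun h => (hneg y h).le
    exact Complex.ext (by simp [r]) (by simpa using (Complex.le_def.1 hle).2)
  refine ⟨r, hr, by simp [r, hb₀], fun y hy => (Complex.lt_def.1 (hneg y hy)).1, fun x => ?_⟩
  have hbx : b x ≤ psiFun U Φ b x := by
    by_cases hx : x ∈ U
    · simpa [psiFun, dif_pos hx] using hsub ⟨x, hx⟩
    · simp [psiFun, dif_neg hx]
  rw [hbr, psiFun_ofReal hU hP hr.isBoundedMeasurable] at hbx
  exact Complex.real_le_real.1 hbx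

variable [∀ u, IsProbabilityMeasure (P u)]

theorem psiFun_iterate_ofReal (hU : MeasurableSet U)
    (hP : IsIntegralRepresentation Φ P)
    (hμ : IsStoppedFellerKernel U (stoppedKernel P)) {f : K → ℝ} (hf : IsBoundedMeasurable f)
    (n : ℕ) : (psiFun U Φ)^[n] (fun y => (f y : ℂ)) =
      fun x => ((kernelAverage (stoppedKernel P))^[n] f x : ℂ) := by
  induction n with
  | zero => rfl
  | succ n ih =>
    rw [Function.iterate_succ_apply', ih,
      psiFun_ofReal hU hP (hμ.isBoundedMeasurable_iterate hU hf n), Function.iterate_succ_apply']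

theorem sq_norm_le_kernelAverage_of_psiFun_eq [CompactSpace K] (hU : MeasurableSet U)
    (hP : IsIntegralRepresentation Φ P)
    {h : K → ℂ} (hh : Continuous h) (hfix : psiFun U Φ h = h) :
    (fun y => ‖h y‖ ^ 2) ≤ kernelAverage (stoppedKernel P) (fun y => ‖h y‖ ^ 2) := fun x => by
  obtain ⟨C, hC⟩ := (isCompact_range hh.norm).bddAbove
  have hb : ∀ y, ‖h y‖ ≤ C := fun y => hC ⟨y, rfl⟩
  have hx : h x = ∫ y, h y ∂stoppedKernel P x :=
    (congrFun hfix x).symm.trans (psiFun_eq_integral hU hP hh.measurable ⟨C, hb⟩ x)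
  show ‖h x‖ ^ 2 ≤ ∫ y, ‖h y‖ ^ 2 ∂stoppedKernel P x
  rw [hx]
  exact sq_norm_integral_le_integral_sq_norm
    (.of_bound hh.measurable.aestronglyMeasurable C (.of_forall hb))
    ((hh.norm.pow 2).isBoundedMeasurable.integrable _)

end MarkovOperator

theorem stmt7_general {K : Type*} [MetricSpace K] [CompactSpace K]
    [MeasurableSpace K] [BorelSpace K]
    (U : Set K) (hUopen : IsOpen U)
    (Φ : (↥U → ℂ) → (↥U → ℂ))
    (hM : IsMarkovOperator Φ) (hSF : HasStrongFeller Φ)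
    (hA : CondA U Φ)
    (h : C(K, ℂ)) (hfix : psiFun U Φ ⇑h = ⇑h) :
    (∀ x : K, ((‖h x‖ ^ 2 : ℝ) : ℂ) ≤
        psiFun U Φ (fun y => ((‖h y‖ ^ 2 : ℝ) : ℂ)) x) ∧
    ∃ p : C(K, ℂ),
      TendstoUniformly
        (fun n x => (psiFun U Φ)^[n] (fun y => ((‖h y‖ ^ 2 : ℝ) : ℂ)) x)
        (⇑p) atTop ∧
      (∀ x : K, ((‖h x‖ ^ 2 : ℝ) : ℂ) ≤ p x) := by
  choose P hPprob hPint using hM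
  have hU := hUopen.measurableSet
  have hμ := isStoppedFellerKernel_stoppedKernel hU hPint hSF
  have hq : Continuous fun y => ‖h y‖ ^ 2 := by fun_prop
  have hsub := sq_norm_le_kernelAverage_of_psiFun_eq hU hPint h.continuous hfix
  obtain ⟨g, hg, hlim, hqg⟩ := hμ.exists_tendstoUniformly_iterate hUopen
    (fun x hx => hA.exists_isBarrierAt hU hPint hx) hq hsub
  have hiter := psiFun_iterate_ofReal hU hPint hμ hq.isBoundedMeasurable
  refine ⟨fun x => ?_, ⟨fun x => g x, by fun_prop⟩, ?_, fun x => Complex.real_le_real.2 (hqg x)⟩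
  · rw [psiFun_ofReal hU hPint hq.isBoundedMeasurable]
    exact Complex.real_le_real.2 (hsub x)
  · simp_rw [hiter]
    exact Complex.isometry_ofReal.uniformContinuous.comp_tendstoUniformly hlim

/-- If `h ∈ C(K)` satisfies `Ψ h = h` then `Ψ(|h|²) ≥ |h|²` on
`K`, the sequence `{Ψⁿ(|h|²)}` converges uniformly on `K` to some
`π(|h|²) ∈ C(K)`, and `π(|h|²) ≥ |h|²` on `K`. -/
theorem stmt7 {K : Type*} [MetricSpace K] [CompactSpace K]
    [MeasurableSpace K] [BorelSpace K]
    (U : Set K) (hUopen : IsOpen U) (hUdense : Dense U)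
    (hbd : ∃ a b : K, a ∈ Uᶜ ∧ b ∈ Uᶜ ∧ a ≠ b)
    (Φ : (↥U → ℂ) → (↥U → ℂ))
    (hM : IsMarkovOperator Φ) (hSF : HasStrongFeller Φ)
    (hA : CondA U Φ)
    (h : C(K, ℂ)) (hfix : psiFun U Φ ⇑h = ⇑h) :
    (∀ x : K, ((‖h x‖ ^ 2 : ℝ) : ℂ) ≤
        psiFun U Φ (fun y => ((‖h y‖ ^ 2 : ℝ) : ℂ)) x) ∧
    ∃ p : C(K, ℂ),
      TendstoUniformly
        (fun n x => (psiFun U Φ)^[n] (fun y => ((‖h y‖ ^ 2 : ℝ) : ℂ)) x)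
        (⇑p) atTop ∧
      (∀ x : K, ((‖h x‖ ^ 2 : ℝ) : ℂ) ≤ p x) :=
  stmt7_general U hUopen Φ hM hSF hA h hfix
end
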